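/- arXiv:1807.10200 — 2 statements merged into one kernel-verified Lean document; each statement's English description precedes it below -/
import Mathlib

section
/- Let 𝒜 ⊆ ℕ be a sequence with increasing enumeration a₀ < a₁ < ⋯. The following are equivalent: (i) A is O-regularly varying (A(λx) ≍ A(x) for every λ > 0) and has positive increase (x^{−γ}A(x) is almost increasing for some γ > 0); (ii) ∫_{1}^{x} A(t)/t dt = Θ(A(x)) as x → ∞; (iii) both A(2x) = O(A(x)) and a_{2n} = O(a_n); (iv) ∫_{1}^{x} s_{𝒜,h}(t)/t dt = Θ(s_{𝒜,h}(x)) for some h ≥ 1 (equivalently, for every h ≥ 1). -/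
/-!
Both conditions in (iii) are dilation properties of the monotone function `A`: `A(2x) = O(A(x))`
is the doubling condition, and, through the Galois connection `k < A(y) ↔ a_k ≤ y`,
`a_{2n} = O(a_n)` is the reverse doubling condition `A(Lx) ≥ 2 A(x)` for some `L > 1`.
Doubling is equivalent to O-regular variation, and iterating reverse doubling gives positive
increase with `γ = log_L 2`. For monotone `f ≥ 0` and `F(x) = ∫₁ˣ f(t) dt/t` one has
`f(a) log(b/a) ≤ F(b) - F(a) ≤ f(b) log(b/a)`; with `F ≍ f` the left inequality gives reverse
doubling, the right one doubling of `F` and hence of `f`. Conversely doubling gives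
`F(x) ≥ f(x/2) log 2 ≫ f(x)`, and positive increase bounds the integrand by
`t^{γ-1} x^{-γ} f(x)`.
Finally `A(x/h)^h ≤ s_{A,h}(x) ≤ A(x)^h` transfers both dilation properties between `A` and
`s_{A,h}`.
-/

open Filter Asymptotics MeasureTheory

/-- Counting function `A(x) = |𝒜 ∩ [0,x]|`. -/
noncomputable def cntA (A : Set ℕ) (x : ℝ) : ℕ :=
  {n : ℕ | n ∈ A ∧ (n : ℝ) ≤ x}.ncard

/-- The increasing enumeration `a₀ < a₁ < ⋯` of a set `A ⊆ ℕ`. -/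
noncomputable def seqA (A : Set ℕ) (n : ℕ) : ℕ := Nat.nth (· ∈ A) n

/-- `A` is an OR sequence: `A(2x) = O(A(x))`. -/
def ORseq (A : Set ℕ) : Prop :=
  (fun x : ℝ => (cntA A (2 * x) : ℝ)) =O[atTop] (fun x : ℝ => (cntA A x : ℝ))

/-- `A` is a PI sequence: `a_{2n} = O(a_n)`. -/
def PIseq (A : Set ℕ) : Prop :=
  (fun n : ℕ => (seqA A (2 * n) : ℝ)) =O[atTop] (fun n : ℕ => (seqA A n : ℝ))

/-- `A` is an OR₊ sequence: an infinite subset of ℕ that is both OR and PI. -/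
def ORplus (A : Set ℕ) : Prop := A.Infinite ∧ ORseq A ∧ PIseq A

/-- `sA A h x` is the number of ordered `h`-tuples of elements of `A` with sum at most `x`. -/
noncomputable def sA (A : Set ℕ) (h : ℕ) (x : ℝ) : ℕ :=
  {t : Fin h → ℕ | (∀ i, t i ∈ A) ∧ ((∑ i, t i : ℕ) : ℝ) ≤ x}.ncard

/-- `f` is almost increasing (on some tail `[x₀, ∞)`): there is `m > 0` with
`f(y) ≥ m·f(x)` for all `y ≥ x ≥ x₀`. -/
def AlmostIncreasing (f : ℝ → ℝ) : Prop :=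
  ∃ m : ℝ, 0 < m ∧ ∃ x₀ : ℝ, ∀ x y : ℝ, x₀ ≤ x → x ≤ y → m * f x ≤ f y

/-- `f` has positive increase: `x^{-γ} f(x)` is almost increasing for some `γ > 0`. -/
def PositiveIncrease (f : ℝ → ℝ) : Prop :=
  ∃ γ : ℝ, 0 < γ ∧ AlmostIncreasing (fun x : ℝ => x ^ (-γ) * f x)

section Asymptotics

variable {α : Type*} {l : Filter α}

lemma isBigO_iff_exists_pos_eventually_le {f g : α → ℝ} (hf : ∀ x, 0 ≤ f x)
    (hg : ∀ x, 0 ≤ g x) : f =O[l] g ↔ ∃ c > 0, ∀ᶠ x in l, f x ≤ c * g x := by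
  have hfn (x : α) : ‖f x‖ = f x := Real.norm_of_nonneg (hf x)
  have hgn (x : α) : ‖g x‖ = g x := Real.norm_of_nonneg (hg x)
  constructor
  · rintro h
    obtain ⟨c, hc, hcg⟩ := h.exists_pos
    exact ⟨c, hc, by simpa only [hfn, hgn] using hcg.bound⟩
  · rintro ⟨c, -, hcg⟩
    exact IsBigO.of_bound c (by simpa only [hfn, hgn] using hcg)

lemma isBigO_of_le_of_nonneg {f g : α → ℝ} (hf : ∀ x, 0 ≤ f x) (hfg : ∀ x, f x ≤ g x) :
    f =O[l] g :=
  isBigO_of_le l fun x => by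
    rw [Real.norm_of_nonneg (hf x)]
    exact (hfg x).trans (Real.le_norm_self _)

end Asymptotics

section RealFunctions

variable {f : ℝ → ℝ}

def IsDoubling (f : ℝ → ℝ) : Prop :=
  (fun x => f (2 * x)) =O[atTop] f

def IsReverseDoubling (f : ℝ → ℝ) : Prop :=
  ∃ L > 1, ∀ᶠ x in atTop, 2 * f x ≤ f (L * x)

lemma tendsto_const_mul_atTop {c : ℝ} (hc : 0 < c) : Tendsto (fun x : ℝ => c * x) atTop atTop :=
  tendsto_id.const_mul_atTop hc

lemma Monotone.isBigO_comp_mul_of_le (hf : Monotone f) (hf0 : ∀ x, 0 ≤ f x) {c d : ℝ}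
    (hcd : c ≤ d) : (fun x => f (c * x)) =O[atTop] (fun x => f (d * x)) := by
  refine IsBigO.of_bound' ?_
  filter_upwards [eventually_ge_atTop 0] with x hx
  rw [Real.norm_of_nonneg (hf0 _), Real.norm_of_nonneg (hf0 _)]
  exact hf (mul_le_mul_of_nonneg_right hcd hx)

lemma isBigO_comp_pow_mul {θ : ℝ} (hθ : 0 < θ)
    (h : (fun x => f (θ * x)) =O[atTop] f) (k : ℕ) :
    (fun x => f (θ ^ k * x)) =O[atTop] f := by
  induction k with
  | zero => simpa using isBigO_refl f atTop
  | succ k ih =>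
    refine ((h.comp_tendsto (tendsto_const_mul_atTop (pow_pos hθ k))).congr_left
      fun x => ?_).trans ih
    simp only [Function.comp_apply, pow_succ, mul_assoc, mul_left_comm θ]

lemma isBigO_comp_mul_of_isBigO_comp_mul (hf : Monotone f) (hf0 : ∀ x, 0 ≤ f x) {θ : ℝ}
    (hθ : 1 < θ) (h : (fun x => f (θ * x)) =O[atTop] f) (c : ℝ) :
    (fun x => f (c * x)) =O[atTop] f := by
  obtain ⟨k, hk⟩ := pow_unbounded_of_one_lt c hθ
  exact (hf.isBigO_comp_mul_of_le hf0 hk.le).trans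
    (isBigO_comp_pow_mul (zero_lt_one.trans hθ) h k)

lemma IsDoubling.isBigO_comp_mul (hf : Monotone f) (hf0 : ∀ x, 0 ≤ f x) (h : IsDoubling f)
    (c : ℝ) : (fun x => f (c * x)) =O[atTop] f :=
  isBigO_comp_mul_of_isBigO_comp_mul hf hf0 one_lt_two h c

lemma isDoubling_iff_forall_isTheta (hf : Monotone f) (hf0 : ∀ x, 0 ≤ f x) :
    IsDoubling f ↔ ∀ c > 0, (fun x => f (c * x)) =Θ[atTop] f := by
  refine ⟨fun h c hc => ⟨h.isBigO_comp_mul hf hf0 c, ?_⟩, fun h => (h 2 two_pos).1⟩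
  refine ((h.isBigO_comp_mul hf hf0 c⁻¹).comp_tendsto (tendsto_const_mul_atTop hc)).congr_left
    fun x => ?_
  simp only [Function.comp_apply, inv_mul_cancel_left₀ hc.ne']

lemma IsReverseDoubling.exists_eventually_pow_mul_le (h : IsReverseDoubling f) :
    ∃ L > 1, ∀ᶠ x in atTop, ∀ k : ℕ, 2 ^ k * f x ≤ f (L ^ k * x) := by
  obtain ⟨L, hL, hev⟩ := h
  obtain ⟨x₀, hx₀⟩ := eventually_atTop.1 hev
  refine ⟨L, hL, ?_⟩
  filter_upwards [eventually_ge_atTop (max x₀ 0)] with x hx k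
  induction k with
  | zero => simp
  | succ k ih =>
    have hxk : x₀ ≤ L ^ k * x := (le_max_left _ _).trans <| hx.trans <|
      le_mul_of_one_le_left ((le_max_right _ _).trans hx) (one_le_pow₀ hL.le)
    calc 2 ^ (k + 1) * f x = 2 * (2 ^ k * f x) := by ring
      _ ≤ 2 * f (L ^ k * x) := by linarith
      _ ≤ f (L * (L ^ k * x)) := hx₀ _ hxk
      _ = f (L ^ (k + 1) * x) := by rw [pow_succ, mul_comm (L ^ k) L, mul_assoc]

lemma mul_rpow_neg_mul_le_iff {γ m x y a b : ℝ} (hx : 0 < x) (hy : 0 < y) :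
    m * (x ^ (-γ) * a) ≤ y ^ (-γ) * b ↔ m * y ^ γ * a ≤ x ^ γ * b := by
  have hxγ := Real.rpow_pos_of_pos hx γ
  have hyγ := Real.rpow_pos_of_pos hy γ
  rw [Real.rpow_neg hx.le, Real.rpow_neg hy.le, ← div_eq_inv_mul, ← div_eq_inv_mul,
    ← mul_div_assoc, div_le_div_iff₀ hxγ hyγ]
  constructor <;> intro h <;> linarith

lemma IsReverseDoubling.positiveIncrease (hf : Monotone f) (hf0 : ∀ x, 0 ≤ f x)
    (h : IsReverseDoubling f) : PositiveIncrease f := by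
  obtain ⟨L, hL, hev⟩ := h.exists_eventually_pow_mul_le
  obtain ⟨x₀, hx₀⟩ := eventually_atTop.1 hev
  have hL0 : 0 < L := zero_lt_one.trans hL
  refine ⟨Real.logb L 2, Real.logb_pos hL one_lt_two, 1 / 2, one_half_pos, max x₀ 1,
    fun x y hx hxy => ?_⟩
  have hx0 : 0 < x := zero_lt_one.trans_le ((le_max_right _ _).trans hx)
  have hy0 : 0 < y := hx0.trans_le hxy
  set γ := Real.logb L 2
  obtain ⟨k, hky, hyk⟩ := exists_nat_pow_near ((one_le_div hx0).2 hxy) hL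
  rw [le_div_iff₀ hx0] at hky
  rw [div_lt_iff₀ hx0] at hyk
  -- `γ = log_L 2` is chosen so that `L ^ γ = 2`
  have hyγ : y ^ γ ≤ 2 ^ (k + 1) * x ^ γ := by
    calc y ^ γ ≤ (L ^ (k + 1) * x) ^ γ :=
          Real.rpow_le_rpow hy0.le hyk.le (Real.logb_pos hL one_lt_two).le
      _ = 2 ^ (k + 1) * x ^ γ := by
          rw [Real.mul_rpow (by positivity) hx0.le, ← Real.rpow_pow_comm hL0.le,
            Real.rpow_logb hL0 hL.ne' two_pos]
  rw [mul_rpow_neg_mul_le_iff hx0 hy0]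
  calc 1 / 2 * y ^ γ * f x ≤ 1 / 2 * (2 ^ (k + 1) * x ^ γ) * f x := by
        gcongr
        exact hf0 x
    _ = x ^ γ * (2 ^ k * f x) := by ring
    _ ≤ x ^ γ * f (L ^ k * x) := by
        gcongr
        exact hx₀ x ((le_max_left _ _).trans hx) k
    _ ≤ x ^ γ * f y := by gcongr; exact hf hky

lemma PositiveIncrease.isReverseDoubling (hf0 : ∀ x, 0 ≤ f x) (h : PositiveIncrease f) :
    IsReverseDoubling f := by
  obtain ⟨γ, hγ, m, hm, x₀, hinc⟩ := h
  obtain ⟨L, hLγ, hL⟩ :=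
    (((tendsto_rpow_atTop hγ).eventually_ge_atTop (2 / m)).and (eventually_ge_atTop 2)).exists
  have hL0 : 0 < L := by linarith
  refine ⟨L, by linarith, ?_⟩
  filter_upwards [eventually_ge_atTop (max x₀ 1)] with x hx
  have hx0 : 0 < x := zero_lt_one.trans_le ((le_max_right _ _).trans hx)
  have key := hinc x (L * x) ((le_max_left _ _).trans hx)
    (le_mul_of_one_le_left hx0.le (by linarith))
  rw [mul_rpow_neg_mul_le_iff hx0 (by positivity), Real.mul_rpow hL0.le hx0.le] at key
  have hxγ := Real.rpow_pos_of_pos hx0 γ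
  have h2 : 2 ≤ m * L ^ γ := by rwa [div_le_iff₀' hm] at hLγ
  calc 2 * f x ≤ m * L ^ γ * f x := mul_le_mul_of_nonneg_right h2 (hf0 x)
    _ ≤ f (L * x) := by
      rw [← mul_le_mul_iff_right₀ hxγ]
      linarith

lemma isReverseDoubling_iff_positiveIncrease (hf : Monotone f) (hf0 : ∀ x, 0 ≤ f x) :
    IsReverseDoubling f ↔ PositiveIncrease f :=
  ⟨fun h => h.positiveIncrease hf hf0, fun h => h.isReverseDoubling hf0⟩

/-- Zero for `x < 1`, where `Set.Icc 1 x` is empty. -/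
noncomputable def dlogIntegral (f : ℝ → ℝ) (x : ℝ) : ℝ := ∫ t in Set.Icc 1 x, f t / t

lemma Monotone.intervalIntegrable_div_id (hf : Monotone f) {a b : ℝ} (ha : 0 < a)
    (hab : a ≤ b) : IntervalIntegrable (fun t => f t / t) volume a b := by
  refine hf.intervalIntegrable.mul_continuousOn (continuousOn_inv₀.mono fun t ht => ?_)
  rw [Set.uIcc_of_le hab] at ht
  exact (ha.trans_le ht.1).ne'

lemma intervalIntegrable_inv_of_pos {a b : ℝ} (ha : 0 < a) (hab : a ≤ b) :
    IntervalIntegrable (fun t : ℝ => t⁻¹) volume a b :=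
  intervalIntegrable_inv_iff.2 <| Or.inr fun h => by
    rw [Set.uIcc_of_le hab] at h
    exact ha.not_ge h.1

lemma Monotone.integral_div_id_le (hf : Monotone f) {a b : ℝ} (ha : 0 < a) (hab : a ≤ b) :
    ∫ t in a..b, f t / t ≤ f b * Real.log (b / a) := by
  rw [← integral_inv_of_pos ha (ha.trans_le hab), ← intervalIntegral.integral_const_mul]
  refine intervalIntegral.integral_mono_on hab (hf.intervalIntegrable_div_id ha hab)
    ((intervalIntegrable_inv_of_pos ha hab).const_mul _) fun t ht => ?_
  rw [div_eq_mul_inv]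
  exact mul_le_mul_of_nonneg_right (hf ht.2) (inv_nonneg.2 (ha.trans_le ht.1).le)

lemma Monotone.le_integral_div_id (hf : Monotone f) {a b : ℝ} (ha : 0 < a) (hab : a ≤ b) :
    f a * Real.log (b / a) ≤ ∫ t in a..b, f t / t := by
  rw [← integral_inv_of_pos ha (ha.trans_le hab), ← intervalIntegral.integral_const_mul]
  refine intervalIntegral.integral_mono_on hab
    ((intervalIntegrable_inv_of_pos ha hab).const_mul _) (hf.intervalIntegrable_div_id ha hab)
    fun t ht => ?_
  rw [div_eq_mul_inv]
  exact mul_le_mul_of_nonneg_right (hf ht.1) (inv_nonneg.2 (ha.trans_le ht.1).le)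

lemma dlogIntegral_eq_intervalIntegral {x : ℝ} (hx : 1 ≤ x) :
    dlogIntegral f x = ∫ t in (1 : ℝ)..x, f t / t := by
  rw [intervalIntegral.integral_of_le hx, dlogIntegral, integral_Icc_eq_integral_Ioc]

lemma Monotone.dlogIntegral_eq_add (hf : Monotone f) {a b : ℝ} (ha : 1 ≤ a) (hab : a ≤ b) :
    dlogIntegral f b = dlogIntegral f a + ∫ t in a..b, f t / t := by
  rw [dlogIntegral_eq_intervalIntegral ha, dlogIntegral_eq_intervalIntegral (ha.trans hab)]
  exact (intervalIntegral.integral_add_adjacent_intervals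
    (hf.intervalIntegrable_div_id one_pos ha)
    (hf.intervalIntegrable_div_id (zero_lt_one.trans_le ha) hab)).symm

lemma dlogIntegral_nonneg (hf0 : ∀ x, 0 ≤ f x) (x : ℝ) : 0 ≤ dlogIntegral f x :=
  setIntegral_nonneg measurableSet_Icc fun t ht => div_nonneg (hf0 t) (zero_le_one.trans ht.1)

lemma dlogIntegral_mono (hf : Monotone f) (hf0 : ∀ x, 0 ≤ f x) :
    Monotone (dlogIntegral f) := by
  intro a b hab
  rcases lt_or_ge a 1 with ha | ha
  · rw [dlogIntegral, Set.Icc_eq_empty ha.not_ge, Measure.restrict_empty, integral_zero_measure]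
    exact dlogIntegral_nonneg hf0 b
  · rw [hf.dlogIntegral_eq_add ha hab, le_add_iff_nonneg_right]
    exact (mul_nonneg (hf0 a) (Real.log_nonneg ((one_le_div (by linarith)).2 hab))).trans
      (hf.le_integral_div_id (by linarith) hab)

lemma Monotone.integral_div_id_le_of_forall_rpow_neg_le (hf : Monotone f)
    (hf0 : ∀ x, 0 ≤ f x) {γ m a x : ℝ} (hγ : 0 < γ) (hm : 0 < m) (ha : 0 < a)
    (hax : a ≤ x)
    (hinc : ∀ t ∈ Set.Icc a x, m * (t ^ (-γ) * f t) ≤ x ^ (-γ) * f x) :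
    ∫ t in a..x, f t / t ≤ (m * γ)⁻¹ * f x := by
  have hx0 : 0 < x := ha.trans_le hax
  -- the hypothesis bounds `f t / t` by `c t ^ (γ - 1)`, whose integral is explicit
  set c := x ^ (-γ) * f x / m with hc
  have hpt : ∀ t ∈ Set.Icc a x, f t / t ≤ c * t ^ (γ - 1) := by
    intro t ht
    have ht0 : 0 < t := ha.trans_le ht.1
    have hinc_t : m * ((t ^ γ)⁻¹ * f t) ≤ x ^ (-γ) * f x := by
      simpa only [Real.rpow_neg ht0.le] using hinc t ht
    have key : m * f t ≤ x ^ (-γ) * f x * t ^ γ :=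
      calc m * f t = m * ((t ^ γ)⁻¹ * f t) * t ^ γ := by
            field_simp [(Real.rpow_pos_of_pos ht0 γ).ne']
        _ ≤ x ^ (-γ) * f x * t ^ γ := by gcongr
    rw [Real.rpow_sub_one ht0.ne', ← mul_div_assoc, div_le_div_iff_of_pos_right ht0,
      div_mul_eq_mul_div, le_div_iff₀' hm]
    exact key
  calc ∫ t in a..x, f t / t ≤ ∫ t in a..x, c * t ^ (γ - 1) :=
        intervalIntegral.integral_mono_on hax (hf.intervalIntegrable_div_id ha hax)
          ((intervalIntegral.intervalIntegrable_rpow' (by linarith)).const_mul c) hpt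
    _ = c * ((x ^ γ - a ^ γ) / γ) := by
        rw [intervalIntegral.integral_const_mul, integral_rpow (Or.inl (by linarith)),
          sub_add_cancel]
    _ ≤ c * (x ^ γ / γ) := by
        gcongr
        · exact div_nonneg (mul_nonneg (Real.rpow_nonneg hx0.le _) (hf0 x)) hm.le
        · exact sub_le_self _ (Real.rpow_nonneg ha.le _)
    _ = (m * γ)⁻¹ * f x := by
        rw [hc, Real.rpow_neg hx0.le]
        field_simp [(Real.rpow_pos_of_pos hx0 γ).ne']

lemma PositiveIncrease.dlogIntegral_isBigO (hf : Monotone f) (hf0 : ∀ x, 0 ≤ f x)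
    (h : PositiveIncrease f) : dlogIntegral f =O[atTop] f := by
  obtain ⟨γ, hγ, m, hm, x₀, hinc⟩ := h
  set x₁ := max x₀ 1
  have hx₁ : 1 ≤ x₁ := le_max_right _ _
  refine (isBigO_iff_exists_pos_eventually_le (dlogIntegral_nonneg hf0) hf0).2
    ⟨Real.log x₁ + (m * γ)⁻¹,
      add_pos_of_nonneg_of_pos (Real.log_nonneg hx₁) (by positivity), ?_⟩
  filter_upwards [eventually_ge_atTop x₁] with x hx
  have hhead : dlogIntegral f x₁ ≤ Real.log x₁ * f x := by
    have := hf.integral_div_id_le one_pos hx₁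
    rw [div_one, ← dlogIntegral_eq_intervalIntegral hx₁] at this
    exact this.trans <| (mul_le_mul_of_nonneg_right (hf hx) (Real.log_nonneg hx₁)).trans_eq
      (mul_comm _ _)
  have htail := hf.integral_div_id_le_of_forall_rpow_neg_le hf0 hγ hm (by linarith) hx
    fun t ht => hinc t x ((le_max_left _ _).trans ht.1) ht.2
  calc dlogIntegral f x = dlogIntegral f x₁ + ∫ t in x₁..x, f t / t :=
        hf.dlogIntegral_eq_add hx₁ hx
    _ ≤ (Real.log x₁ + (m * γ)⁻¹) * f x := by linarith

lemma IsDoubling.isBigO_dlogIntegral (hf : Monotone f) (hf0 : ∀ x, 0 ≤ f x)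
    (h : IsDoubling f) : f =O[atTop] dlogIntegral f := by
  have hhalf : f =O[atTop] fun x => f (2⁻¹ * x) :=
    (h.comp_tendsto (tendsto_const_mul_atTop (by norm_num : (0 : ℝ) < 2⁻¹))).congr_left
      fun x => by simp only [Function.comp_apply, mul_inv_cancel_left₀ (two_ne_zero' ℝ)]
  refine hhalf.trans <| (isBigO_iff_exists_pos_eventually_le (fun x => hf0 _)
    (dlogIntegral_nonneg hf0)).2 ⟨(Real.log 2)⁻¹, by positivity, ?_⟩
  filter_upwards [eventually_ge_atTop 2] with x hx
  have hhalf_le : 2⁻¹ * x ≤ x := by linarith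
  have hlow := hf.le_integral_div_id (by linarith) hhalf_le
  rw [div_mul_cancel_right₀ (by linarith : x ≠ 0), inv_inv] at hlow
  rw [le_inv_mul_iff₀ (Real.log_pos one_lt_two),
    hf.dlogIntegral_eq_add (by linarith) hhalf_le]
  linarith [dlogIntegral_nonneg hf0 (2⁻¹ * x)]

lemma isReverseDoubling_of_dlogIntegral_isBigO (hf : Monotone f) (hf0 : ∀ x, 0 ≤ f x)
    (h : dlogIntegral f =O[atTop] f) : IsReverseDoubling f := by
  obtain ⟨c, hc, hcf⟩ := (isBigO_iff_exists_pos_eventually_le (dlogIntegral_nonneg hf0) hf0).1 h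
  have hL : 1 < Real.exp (2 * c) := Real.one_lt_exp_iff.2 (by positivity)
  refine ⟨Real.exp (2 * c), hL, ?_⟩
  filter_upwards [tendsto_const_mul_atTop (zero_lt_one.trans hL) |>.eventually hcf,
    eventually_ge_atTop 1] with x hLx hx
  have hxL : x ≤ Real.exp (2 * c) * x := le_mul_of_one_le_left (by linarith) hL.le
  have hlow := hf.le_integral_div_id (by linarith) hxL
  rw [mul_div_cancel_right₀ _ (by linarith : x ≠ 0), Real.log_exp] at hlow
  rw [hf.dlogIntegral_eq_add hx hxL] at hLx
  nlinarith [dlogIntegral_nonneg hf0 x]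

lemma isDoubling_dlogIntegral (hf : Monotone f) (hf0 : ∀ x, 0 ≤ f x)
    (h : f =O[atTop] dlogIntegral f) : IsDoubling (dlogIntegral f) := by
  obtain ⟨c, hc, hcf⟩ := (isBigO_iff_exists_pos_eventually_le hf0 (dlogIntegral_nonneg hf0)).1 h
  set θ := Real.exp (2 * c)⁻¹ with hθ_def
  have hθ : 1 < θ := Real.one_lt_exp_iff.2 (by positivity)
  refine isBigO_comp_mul_of_isBigO_comp_mul (dlogIntegral_mono hf hf0)
    (dlogIntegral_nonneg hf0) hθ ?_ 2
  refine (isBigO_iff_exists_pos_eventually_le (fun x => dlogIntegral_nonneg hf0 _)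
    (dlogIntegral_nonneg hf0)).2 ⟨2, two_pos, ?_⟩
  filter_upwards [tendsto_const_mul_atTop (zero_lt_one.trans hθ) |>.eventually hcf,
    eventually_ge_atTop 1] with x hθx hx
  have hxθ : x ≤ θ * x := le_mul_of_one_le_left (by linarith) hθ.le
  have hup := hf.integral_div_id_le (by linarith) hxθ
  rw [mul_div_cancel_right₀ _ (by linarith : x ≠ 0), hθ_def, Real.log_exp] at hup
  rw [hf.dlogIntegral_eq_add hx hxθ] at hθx ⊢
  set I := ∫ t in x..θ * x, f t / t
  -- the choice `log θ = 1 / (2c)` makes the increment `I` at most half of `F(θx) = F(x) + I`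
  have hI : I ≤ (dlogIntegral f x + I) / 2 :=
    calc I ≤ f (θ * x) * (2 * c)⁻¹ := hup
      _ ≤ c * (dlogIntegral f x + I) * (2 * c)⁻¹ := by gcongr
      _ = (dlogIntegral f x + I) / 2 := by field_simp
  linarith

theorem isTheta_dlogIntegral_iff (hf : Monotone f) (hf0 : ∀ x, 0 ≤ f x) :
    dlogIntegral f =Θ[atTop] f ↔ IsDoubling f ∧ IsReverseDoubling f := by
  refine ⟨fun h => ⟨?_, isReverseDoubling_of_dlogIntegral_isBigO hf hf0 h.1⟩,
    fun ⟨hd, hr⟩ => ⟨(hr.positiveIncrease hf hf0).dlogIntegral_isBigO hf hf0,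
      hd.isBigO_dlogIntegral hf hf0⟩⟩
  exact (h.2.comp_tendsto (tendsto_const_mul_atTop two_pos)).trans
    ((isDoubling_dlogIntegral hf hf0 h.2).trans h.1)

end RealFunctions

section Counting

variable {A : Set ℕ}

lemma cntA_setOf_finite (A : Set ℕ) (x : ℝ) : {n : ℕ | n ∈ A ∧ (n : ℝ) ≤ x}.Finite :=
  (Set.finite_Iic ⌊x⌋₊).subset fun _ hn => Nat.le_floor hn.2

lemma cntA_mono (A : Set ℕ) : Monotone fun x => (cntA A x : ℝ) := fun _ y hxy =>
  Nat.cast_le.2 <|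
    Set.ncard_le_ncard (fun _ hn => ⟨hn.1, hn.2.trans hxy⟩) (cntA_setOf_finite A y)

open Classical in
lemma cntA_eq_count (A : Set ℕ) {x : ℝ} (hx : 0 ≤ x) :
    cntA A x = Nat.count (· ∈ A) (⌊x⌋₊ + 1) := by
  rw [cntA, Nat.count_eq_card_filter_range, ← Set.ncard_coe_finset]
  congr 1
  ext n
  simp only [Set.mem_ofPred_eq, Finset.coe_filter, Finset.mem_range, Nat.lt_succ_iff,
    Nat.le_floor_iff hx]
  tauto

lemma lt_cntA_iff (hA : A.Infinite) {k : ℕ} {y : ℝ} :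
    k < cntA A y ↔ (seqA A k : ℝ) ≤ y := by
  classical
  rcases lt_or_ge y 0 with hy | hy
  · have hempty : {n : ℕ | n ∈ A ∧ (n : ℝ) ≤ y} = ∅ :=
      Set.eq_empty_of_forall_notMem fun n hn => (hn.2.trans_lt hy).not_ge n.cast_nonneg
    simp only [cntA, hempty, Set.ncard_empty, Nat.not_lt_zero, false_iff, not_le]
    exact hy.trans_le (Nat.cast_nonneg _)
  · rw [cntA_eq_count A hy, Nat.lt_nth_iff_count_lt (p := (· ∈ A)) hA, Nat.lt_succ_iff,
      ← Nat.le_floor_iff hy]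
    rfl

lemma tendsto_cntA_atTop (hA : A.Infinite) : Tendsto (cntA A) atTop atTop :=
  tendsto_atTop.2 fun k => (eventually_ge_atTop (seqA A k : ℝ)).mono fun _ hy =>
    ((lt_cntA_iff hA).2 hy).le

lemma seqA_strictMono (hA : A.Infinite) : StrictMono (seqA A) := Nat.nth_strictMono hA

lemma isReverseDoubling_cntA_of_piSeq (hA : A.Infinite) (h : PIseq A) :
    IsReverseDoubling fun x => (cntA A x : ℝ) := by
  have h4 : (fun n => (seqA A (2 * (2 * n)) : ℝ)) =O[atTop] fun n => (seqA A n : ℝ) :=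
    (h.comp_tendsto (tendsto_id.const_mul_atTop' two_pos)).trans h
  obtain ⟨C, hC, hCev⟩ := (isBigO_iff_exists_pos_eventually_le (fun _ => Nat.cast_nonneg _)
    (fun _ => Nat.cast_nonneg _)).1 h4
  refine ⟨max C 2, by simp, ?_⟩
  filter_upwards [(tendsto_sub_atTop_nat 1).comp (tendsto_cntA_atTop hA) |>.eventually hCev,
    (tendsto_cntA_atTop hA).eventually_ge_atTop 2, eventually_ge_atTop 0] with x hCx hm hx
  set m := cntA A x
  -- `a_{2m-1} ≤ a_{4(m-1)} ≤ C a_{m-1} ≤ C x`, so at least `2m` elements are at most `max C 2 * x`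
  have hseq : (seqA A (2 * m - 1) : ℝ) ≤ max C 2 * x :=
    calc (seqA A (2 * m - 1) : ℝ) ≤ seqA A (2 * (2 * (m - 1))) := by
          exact_mod_cast (seqA_strictMono hA).monotone (by omega)
      _ ≤ C * seqA A (m - 1) := hCx
      _ ≤ max C 2 * x := by
          gcongr
          · exact le_max_left _ _
          · exact (lt_cntA_iff hA).1 (by omega)
  have := (lt_cntA_iff hA).2 hseq
  exact_mod_cast (show 2 * m ≤ cntA A (max C 2 * x) by omega)

lemma piSeq_of_isReverseDoubling_cntA (hA : A.Infinite)
    (h : IsReverseDoubling fun x => (cntA A x : ℝ)) : PIseq A := by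
  obtain ⟨L, hL, hev⟩ := h
  have htend : Tendsto (fun n => (seqA A n : ℝ)) atTop atTop :=
    tendsto_natCast_atTop_atTop.comp (seqA_strictMono hA).tendsto_atTop
  refine (isBigO_iff_exists_pos_eventually_le (fun _ => Nat.cast_nonneg _)
    (fun _ => Nat.cast_nonneg _)).2 ⟨L, zero_lt_one.trans hL, ?_⟩
  filter_upwards [htend.eventually hev] with n hn
  -- `A(a_n) ≥ n + 1`, so `A(L a_n) ≥ 2n + 2` and hence `a_{2n} ≤ L a_n`
  have hn1 : n + 1 ≤ cntA A (seqA A n) := (lt_cntA_iff hA).2 le_rfl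
  have : 2 * n < cntA A (L * seqA A n) := by
    have : (2 * (n + 1) : ℝ) ≤ cntA A (L * seqA A n) :=
      le_trans (by gcongr; exact_mod_cast hn1) hn
    exact_mod_cast (show ((2 * n : ℕ) : ℝ) < cntA A (L * seqA A n) by push_cast; linarith)
  exact (lt_cntA_iff hA).1 this

lemma piSeq_iff_isReverseDoubling (hA : A.Infinite) :
    PIseq A ↔ IsReverseDoubling fun x => (cntA A x : ℝ) :=
  ⟨isReverseDoubling_cntA_of_piSeq hA, piSeq_of_isReverseDoubling_cntA hA⟩

end Counting

section SumCounting

variable {A : Set ℕ} {h : ℕ}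

lemma ncard_setOf_forall_mem (S : Set ℕ) (h : ℕ) :
    {t : Fin h → ℕ | ∀ i, t i ∈ S}.ncard = S.ncard ^ h := by
  rw [← Nat.card_coe_set_eq, ← Nat.card_coe_set_eq]
  calc Nat.card {t : Fin h → ℕ | ∀ i, t i ∈ S}
      = Nat.card (Fin h → S) := Nat.card_congr Equiv.subtypePiEquivPi
    _ = Nat.card S ^ h := by simp [Nat.card_fun]

lemma sA_subset (A : Set ℕ) (h : ℕ) (x : ℝ) :
    {t : Fin h → ℕ | (∀ i, t i ∈ A) ∧ ((∑ i, t i : ℕ) : ℝ) ≤ x} ⊆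
      {t : Fin h → ℕ | ∀ i, t i ∈ {n : ℕ | n ∈ A ∧ (n : ℝ) ≤ x}} := by
  intro t ht i
  have hi : t i ≤ ∑ j, t j :=
    Finset.single_le_sum (fun j _ => Nat.zero_le (t j)) (Finset.mem_univ i)
  exact ⟨ht.1 i, le_trans (by exact_mod_cast hi) ht.2⟩

lemma sA_setOf_finite (A : Set ℕ) (h : ℕ) (x : ℝ) :
    {t : Fin h → ℕ | (∀ i, t i ∈ A) ∧ ((∑ i, t i : ℕ) : ℝ) ≤ x}.Finite :=
  (Set.Finite.pi' fun _ => cntA_setOf_finite A x).subset (sA_subset A h x)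

lemma sA_mono (A : Set ℕ) (h : ℕ) : Monotone fun x => (sA A h x : ℝ) := fun _ y hxy =>
  Nat.cast_le.2 <|
    Set.ncard_le_ncard (fun _ ht => ⟨ht.1, ht.2.trans hxy⟩) (sA_setOf_finite A h y)

lemma sA_le_cntA_pow (A : Set ℕ) (h : ℕ) (x : ℝ) : sA A h x ≤ cntA A x ^ h := by
  rw [sA, cntA, ← ncard_setOf_forall_mem]
  exact Set.ncard_le_ncard (sA_subset A h x) (Set.Finite.pi' fun _ => cntA_setOf_finite A x)

lemma cntA_div_pow_le_sA (A : Set ℕ) (hh : 0 < h) (x : ℝ) :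
    cntA A (x / h) ^ h ≤ sA A h x := by
  rw [sA, cntA, ← ncard_setOf_forall_mem]
  refine Set.ncard_le_ncard (fun t ht => ⟨fun i => (ht i).1, ?_⟩) (sA_setOf_finite A h x)
  calc ((∑ i, t i : ℕ) : ℝ) = ∑ i, (t i : ℝ) := by push_cast; rfl
    _ ≤ ∑ _i : Fin h, x / h := Finset.sum_le_sum fun i _ => (ht i).2
    _ = x := by simp [field]

lemma isDoubling_sA_iff (hh : 0 < h) :
    IsDoubling (fun x => (sA A h x : ℝ)) ↔ IsDoubling fun x => (cntA A x : ℝ) := by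
  have hh' : (h : ℝ) ≠ 0 := by positivity
  have hsA_le (x : ℝ) : (sA A h x : ℝ) ≤ (cntA A x : ℝ) ^ h := by
    exact_mod_cast sA_le_cntA_pow A h x
  have hle_sA (x : ℝ) : (cntA A (x / h) : ℝ) ^ h ≤ sA A h x := by
    exact_mod_cast cntA_div_pow_le_sA A hh x
  constructor
  · -- `A(2x)^h ≤ s(2hx) = O(s(x)) ≤ A(x)^h`
    intro hd
    refine IsBigO.of_pow hh.ne' ?_
    refine (isBigO_of_le_of_nonneg (fun _ => by simp only [Pi.pow_apply]; positivity)
      fun x => ?_).trans <|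
      (hd.isBigO_comp_mul (sA_mono A h) (fun _ => Nat.cast_nonneg _) (2 * h)).trans <|
      isBigO_of_le_of_nonneg (fun _ => Nat.cast_nonneg _) hsA_le
    simpa only [Pi.pow_apply, mul_right_comm, mul_div_cancel_right₀ _ hh'] using
      hle_sA (2 * h * x)
  · -- `s(2x) ≤ A(2x)^h = O(A(x/h)^h) ≤ s(x)`
    intro hd
    have hcomp : (fun x => (cntA A (2 * x) : ℝ)) =O[atTop] fun x => (cntA A (x / h) : ℝ) :=
      ((hd.isBigO_comp_mul (cntA_mono A) (fun _ => Nat.cast_nonneg _) (2 * h)).comp_tendsto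
        (tendsto_const_mul_atTop (inv_pos.2 (by positivity : (0 : ℝ) < h)))).congr
        (fun x => by simp only [Function.comp_apply, mul_assoc, mul_inv_cancel_left₀ hh'])
        (fun x => by simp only [Function.comp_apply, inv_mul_eq_div])
    exact (isBigO_of_le_of_nonneg (fun _ => Nat.cast_nonneg _) fun x => hsA_le (2 * x)).trans <|
      (hcomp.pow h).trans <| isBigO_of_le_of_nonneg (fun _ => by positivity) hle_sA

lemma isReverseDoubling_sA_iff (hh : 0 < h) :
    IsReverseDoubling (fun x => (sA A h x : ℝ)) ↔
      IsReverseDoubling fun x => (cntA A x : ℝ) := by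
  have hh' : (h : ℝ) ≠ 0 := by positivity
  have hh1 : (1 : ℝ) ≤ h := by exact_mod_cast hh
  have hsA_le (x : ℝ) : (sA A h x : ℝ) ≤ (cntA A x : ℝ) ^ h := by
    exact_mod_cast sA_le_cntA_pow A h x
  have hle_sA (x : ℝ) : (cntA A (x / h) : ℝ) ^ h ≤ sA A h x := by
    exact_mod_cast cntA_div_pow_le_sA A hh x
  constructor
  · -- `(2 A(x))^h ≤ 2^h s(hx) ≤ s(L^h hx) ≤ A(L^h hx)^h`
    intro hr
    obtain ⟨L, hL, hev⟩ := hr.exists_eventually_pow_mul_le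
    refine ⟨L ^ h * h, one_lt_mul_of_lt_of_le (one_lt_pow₀ hL hh.ne') hh1, ?_⟩
    filter_upwards [(tendsto_const_mul_atTop (by positivity : (0 : ℝ) < h)).eventually hev]
      with x hx
    refine (pow_le_pow_iff_left₀ (by positivity) (Nat.cast_nonneg _) hh.ne').1 ?_
    calc (2 * (cntA A x : ℝ)) ^ h = 2 ^ h * (cntA A (h * x / h) : ℝ) ^ h := by
          rw [mul_pow, mul_div_cancel_left₀ _ hh']
      _ ≤ 2 ^ h * sA A h (h * x) := by gcongr; exact hle_sA _
      _ ≤ sA A h (L ^ h * (h * x)) := hx h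
      _ ≤ (cntA A (L ^ h * h * x) : ℝ) ^ h := by rw [← mul_assoc]; exact hsA_le _
  · -- `2 s(x) ≤ (2 A(x))^h ≤ A(Lx)^h ≤ s(hLx)`
    intro hr
    obtain ⟨L, hL, hev⟩ := hr
    refine ⟨h * L, one_lt_mul_of_le_of_lt hh1 hL, ?_⟩
    filter_upwards [hev] with x hx
    have h2 : (2 : ℝ) ≤ 2 ^ h := le_self_pow₀ one_le_two hh.ne'
    calc 2 * (sA A h x : ℝ) ≤ 2 ^ h * (cntA A x : ℝ) ^ h := by
          gcongr
          exact hsA_le x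
      _ = (2 * (cntA A x : ℝ)) ^ h := (mul_pow _ _ _).symm
      _ ≤ (cntA A (h * L * x / h) : ℝ) ^ h := by
          rw [mul_assoc, mul_div_cancel_left₀ _ hh']
          gcongr
      _ ≤ sA A h (h * L * x) := hle_sA _

end SumCounting

theorem stmt_14 (A : Set ℕ) (hA : A.Infinite) :
    List.TFAE [
      -- (i) A is O-regularly varying and has positive increase
      (∀ lam : ℝ, 0 < lam →
        (fun x : ℝ => (cntA A (lam * x) : ℝ)) =Θ[atTop] (fun x : ℝ => (cntA A x : ℝ))) ∧
        PositiveIncrease (fun x : ℝ => (cntA A x : ℝ)),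
      -- (ii) ∫₁ˣ A(t)/t dt = Θ(A(x))
      (fun x : ℝ => ∫ t in Set.Icc 1 x, (cntA A t : ℝ) / t) =Θ[atTop]
        (fun x : ℝ => (cntA A x : ℝ)),
      -- (iii) A(2x) = O(A(x)) and a_{2n} = O(a_n)
      ORseq A ∧ PIseq A,
      -- (iv) ∫₁ˣ s_{A,h}(t)/t dt = Θ(s_{A,h}(x)) for some h ≥ 1
      ∃ h : ℕ, 1 ≤ h ∧
        (fun x : ℝ => ∫ t in Set.Icc 1 x, (sA A h t : ℝ) / t) =Θ[atTop]
          (fun x : ℝ => (sA A h x : ℝ)),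
      -- (iv') the same for every h ≥ 1
      ∀ h : ℕ, 1 ≤ h →
        (fun x : ℝ => ∫ t in Set.Icc 1 x, (sA A h t : ℝ) / t) =Θ[atTop]
          (fun x : ℝ => (sA A h x : ℝ))
    ] := by
  have hcnt := cntA_mono A
  have hcnt0 (x : ℝ) : 0 ≤ (cntA A x : ℝ) := Nat.cast_nonneg _
  have hsum (h : ℕ) (hh : 1 ≤ h) :
      dlogIntegral (fun x => (sA A h x : ℝ)) =Θ[atTop] (fun x => (sA A h x : ℝ)) ↔
        ORseq A ∧ PIseq A := by
    rw [isTheta_dlogIntegral_iff (sA_mono A h) (fun _ => Nat.cast_nonneg _),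
      isDoubling_sA_iff hh, isReverseDoubling_sA_iff hh, piSeq_iff_isReverseDoubling hA]
    rfl
  tfae_have 1 ↔ 3 := by
    rw [← isDoubling_iff_forall_isTheta hcnt hcnt0,
      ← isReverseDoubling_iff_positiveIncrease hcnt hcnt0, piSeq_iff_isReverseDoubling hA]
    rfl
  tfae_have 2 ↔ 3 := by
    rw [piSeq_iff_isReverseDoubling hA]
    exact isTheta_dlogIntegral_iff hcnt hcnt0
  tfae_have 3 → 5 := fun h3 h hh => (hsum h hh).2 h3
  tfae_have 5 → 4 := fun h5 => ⟨1, le_rfl, h5 1 le_rfl⟩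
  tfae_have 4 → 3 := fun ⟨h, hh, h4⟩ => (hsum h hh).1 h4
  tfae_finish
end

section
/- Let 𝒟 := 𝒫₃ ∪ { (2^{2^k})³ + t : 0 ≤ t ≤ (2^{2^k})², k ∈ ℕ } ⊆ ℕ, where 𝒫₃ := {m³ : m ∈ ℕ} is the sequence of cubes, and let D(x) := |𝒟 ∩ [0,x]|. Then D(2x) ≠ O(D(x)) (indeed limsup_{x→∞} D(2x)/D(x) = ∞), so 𝒟 is not an OR sequence, even though 𝒟 contains the cubes and hence is an additive basis. -/
/-!
Below `N³` with `N = 2^(2^k)`, the set `𝒟` consists of the `N + 1` cubes `j³ ≤ N³` and the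
`k` earlier blocks, each of size `(2^(2^i))² + 1 ≤ N + 1`; so `D(N³) ≤ (k + 1)(N + 1)`.
The block starting at `N³` lies below `2N³` and alone has `N² + 1` elements, so
`D(2N³) / D(N³) ≥ N / (2(k + 1)) ≥ 2^(k-1)`, which is unbounded.
-/

open Filter Asymptotics

/-- `A` is an additive basis: `hA = ℕ` for some `h ≥ 2`. -/
def AddBasis (A : Set ℕ) : Prop :=
  ∃ h : ℕ, 2 ≤ h ∧ ∀ n : ℕ, ∃ t : Fin h → ℕ, (∀ i, t i ∈ A) ∧ ∑ i, t i = n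

/-- The sequence 𝒟 from Remark A.9: the cubes 𝒫₃ together with, for each `k ∈ ℕ`,
the interval `[(2^{2^k})³, (2^{2^k})³ + (2^{2^k})²]`. -/
def Dseq : Set ℕ :=
  {m : ℕ | ∃ j : ℕ, m = j ^ 3} ∪
    {m : ℕ | ∃ k : ℕ, ∃ t ≤ (2 ^ 2 ^ k) ^ 2, m = (2 ^ 2 ^ k) ^ 3 + t}

section Counting

variable {A : Set ℕ} {x : ℝ}

lemma card_le_cntA {s : Finset ℕ} (hs : ∀ n ∈ s, n ∈ A ∧ (n : ℝ) ≤ x) : s.card ≤ cntA A x := by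
  have hfin : {n : ℕ | n ∈ A ∧ (n : ℝ) ≤ x}.Finite :=
    (Set.finite_Iic ⌊x⌋₊).subset fun n hn => Nat.le_floor hn.2
  rw [cntA, ← Set.ncard_coe_finset]
  exact Set.ncard_le_ncard (fun n hn => hs n hn) hfin

lemma cntA_le_card {s : Finset ℕ} (hs : ∀ n ∈ A, (n : ℝ) ≤ x → n ∈ s) : cntA A x ≤ s.card := by
  simpa [cntA] using Set.ncard_le_ncard (fun n hn => hs n hn.1 hn.2) s.finite_toSet

lemma cntA_pos (h0 : 0 ∈ A) (hx : 0 ≤ x) : 0 < cntA A x :=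
  card_le_cntA (s := {0}) (by simpa using ⟨h0, hx⟩)

end Counting

lemma not_isBigO_of_frequently_lt_div {α : Type*} {l : Filter α} {f g : α → ℝ}
    (h : ∀ M, ∃ᶠ x in l, M < f x / g x) : ¬ f =O[l] g := by
  intro hO
  obtain ⟨C, hC, hfg⟩ := hO.exists_pos
  obtain ⟨x, hlt, hle⟩ := ((h C).and_eventually hfg.bound).exists
  have : f x / g x ≤ C := calc
    f x / g x ≤ ‖f x‖ / ‖g x‖ := by rw [← norm_div]; exact Real.le_norm_self _
    _ ≤ C := div_le_of_le_mul₀ (norm_nonneg _) hC.le hle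
  linarith

lemma pow_mul_succ_le_two_pow_two_pow (k : ℕ) : 2 ^ k * (k + 1) ≤ 2 ^ 2 ^ k := by
  have h2k : k + k ≤ 2 ^ k := by
    rcases k with _ | k
    · simp
    · have := Nat.lt_two_pow_self (n := k)
      rw [pow_succ]
      omega
  calc 2 ^ k * (k + 1) ≤ 2 ^ k * 2 ^ k := Nat.mul_le_mul_left _ Nat.lt_two_pow_self
    _ = 2 ^ (k + k) := (pow_add _ _ _).symm
    _ ≤ 2 ^ 2 ^ k := Nat.pow_le_pow_right two_pos h2k

lemma addBasis_of_forall_cube_mem {A : Set ℕ} (hA : ∀ m, m ^ 3 ∈ A)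
    (h9 : ∀ n : ℕ, ∃ t : Fin 9 → ℕ, (∀ i, ∃ m : ℕ, t i = m ^ 3) ∧ ∑ i, t i = n) :
    AddBasis A := by
  refine ⟨9, by norm_num, fun n => ?_⟩
  obtain ⟨t, ht, hsum⟩ := h9 n
  refine ⟨t, fun i => ?_, hsum⟩
  obtain ⟨m, hm⟩ := ht i
  exact hm ▸ hA m

namespace Dseq

lemma cube_mem (j : ℕ) : j ^ 3 ∈ Dseq := Or.inl ⟨j, rfl⟩

lemma block_mem (k : ℕ) {t : ℕ} (ht : t ≤ (2 ^ 2 ^ k) ^ 2) : (2 ^ 2 ^ k) ^ 3 + t ∈ Dseq :=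
  Or.inr ⟨k, t, ht, rfl⟩

lemma sq_add_one_le_cntA (k : ℕ) :
    (2 ^ 2 ^ k) ^ 2 + 1 ≤ cntA Dseq (2 * (((2 ^ 2 ^ k) ^ 3 : ℕ) : ℝ)) := by
  set N : ℕ := 2 ^ 2 ^ k
  have hN : N ^ 2 ≤ N ^ 3 := Nat.pow_le_pow_right Nat.one_le_two_pow (by norm_num)
  calc N ^ 2 + 1 = ((Finset.range (N ^ 2 + 1)).image (N ^ 3 + ·)).card := by
        rw [Finset.card_image_of_injective _ (add_right_injective _), Finset.card_range]
    _ ≤ _ := card_le_cntA fun n hn => by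
        obtain ⟨t, ht, rfl⟩ := Finset.mem_image.mp hn
        have ht : t ≤ N ^ 2 := Finset.mem_range_succ_iff.mp ht
        exact ⟨block_mem k ht, by exact_mod_cast (by omega : N ^ 3 + t ≤ 2 * N ^ 3)⟩

lemma cntA_le (k : ℕ) :
    cntA Dseq (((2 ^ 2 ^ k) ^ 3 : ℕ) : ℝ) ≤ (k + 1) * (2 ^ 2 ^ k + 1) := by
  set N : ℕ := 2 ^ 2 ^ k
  let cubes := (Finset.range (N + 1)).image (· ^ 3)
  let blocks := (Finset.range k).biUnion fun i =>
    (Finset.range ((2 ^ 2 ^ i) ^ 2 + 1)).image ((2 ^ 2 ^ i) ^ 3 + ·)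
  have hcube : ∀ j, j ^ 3 ≤ N ^ 3 → j ^ 3 ∈ cubes ∪ blocks := fun j hj =>
    Finset.mem_union_left _ <| Finset.mem_image_of_mem _ <| Finset.mem_range_succ_iff.mpr <|
      (Nat.pow_le_pow_iff_left (by norm_num)).mp hj
  have hblock : ∀ i < k, ((Finset.range ((2 ^ 2 ^ i) ^ 2 + 1)).image
      ((2 ^ 2 ^ i) ^ 3 + ·)).card ≤ N + 1 := fun i hi => by
    refine Finset.card_image_le.trans ?_
    rw [Finset.card_range, ← pow_mul, ← pow_succ]
    exact Nat.succ_le_succ (Nat.pow_le_pow_right two_pos (Nat.pow_le_pow_right two_pos hi))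
  calc cntA Dseq (N ^ 3 : ℕ) ≤ (cubes ∪ blocks).card := cntA_le_card fun n hn hle => by
        have hle : n ≤ N ^ 3 := by exact_mod_cast hle
        rcases hn with ⟨j, rfl⟩ | ⟨i, t, ht, rfl⟩
        · exact hcube j hle
        rcases lt_or_ge i k with hi | hi
        · exact Finset.mem_union_right _ <| Finset.mem_biUnion.mpr ⟨i, Finset.mem_range.mpr hi,
            Finset.mem_image_of_mem _ (Finset.mem_range_succ_iff.mpr ht)⟩
        -- a block starting at or beyond `N³` meets `[0, N³]` only in the cube `N³`
        have hNi : N ^ 3 ≤ (2 ^ 2 ^ i) ^ 3 := Nat.pow_le_pow_left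
          (Nat.pow_le_pow_right two_pos (Nat.pow_le_pow_right two_pos hi)) 3
        obtain rfl : t = 0 := by omega
        exact hcube _ hle
    _ ≤ cubes.card + blocks.card := Finset.card_union_le _ _
    _ ≤ (N + 1) + k * (N + 1) := by
        gcongr
        · exact Finset.card_image_le.trans (Finset.card_range _).le
        · simpa using Finset.card_biUnion_le_card_mul _ _ _ fun i hi =>
            hblock i (Finset.mem_range.mp hi)
    _ = (k + 1) * (N + 1) := by ring

lemma two_pow_mul_cntA_le (k : ℕ) :
    2 ^ k * cntA Dseq (((2 ^ 2 ^ k) ^ 3 : ℕ) : ℝ) ≤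
      2 * cntA Dseq (2 * (((2 ^ 2 ^ k) ^ 3 : ℕ) : ℝ)) := by
  have hN : 1 ≤ 2 ^ 2 ^ k := Nat.one_le_two_pow
  have hk := pow_mul_succ_le_two_pow_two_pow k
  have hup := Nat.mul_le_mul_left (2 ^ k) (cntA_le k)
  have hlo := sq_add_one_le_cntA k
  nlinarith

lemma frequently_lt_cntA_div (M : ℝ) :
    ∃ᶠ x : ℝ in atTop, M < (cntA Dseq (2 * x) : ℝ) / (cntA Dseq x : ℝ) := by
  have hx : Tendsto (fun k : ℕ => (((2 ^ 2 ^ k) ^ 3 : ℕ) : ℝ)) atTop atTop := by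
    refine tendsto_natCast_atTop_atTop.comp (tendsto_atTop_mono (fun k => ?_) tendsto_id)
    calc k ≤ 2 ^ k := (Nat.lt_two_pow_self).le
      _ ≤ 2 ^ 2 ^ k := Nat.pow_le_pow_right two_pos (Nat.lt_two_pow_self).le
      _ ≤ (2 ^ 2 ^ k) ^ 3 := Nat.le_self_pow (by norm_num) _
  refine hx.frequently (Eventually.frequently ?_)
  filter_upwards [(tendsto_pow_atTop_atTop_of_one_lt one_lt_two).eventually_gt_atTop (2 * M)]
    with k hk
  have hpos : (0 : ℝ) < cntA Dseq (((2 ^ 2 ^ k) ^ 3 : ℕ) : ℝ) :=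
    Nat.cast_pos.mpr (cntA_pos (cube_mem 0) (Nat.cast_nonneg _))
  have hratio : (2 : ℝ) ^ k * cntA Dseq (((2 ^ 2 ^ k) ^ 3 : ℕ) : ℝ) ≤
      2 * cntA Dseq (2 * (((2 ^ 2 ^ k) ^ 3 : ℕ) : ℝ)) := by
    exact_mod_cast two_pow_mul_cntA_le k
  rw [lt_div_iff₀ hpos]
  nlinarith

end Dseq

theorem stmt_19
    (h9 : ∀ n : ℕ, ∃ t : Fin 9 → ℕ, (∀ i, ∃ m : ℕ, t i = m ^ 3) ∧ ∑ i, t i = n) :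
    ¬ ((fun x : ℝ => (cntA Dseq (2 * x) : ℝ)) =O[atTop]
        (fun x : ℝ => (cntA Dseq x : ℝ))) ∧
    (∀ M : ℝ, ∃ᶠ x : ℝ in atTop,
      M < (cntA Dseq (2 * x) : ℝ) / (cntA Dseq x : ℝ)) ∧
    AddBasis Dseq :=
  ⟨not_isBigO_of_frequently_lt_div Dseq.frequently_lt_cntA_div, Dseq.frequently_lt_cntA_div,
    addBasis_of_forall_cube_mem Dseq.cube_mem h9⟩
end
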